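/- arXiv:1604.08323 — 2 statements merged into one kernel-verified Lean document; each statement's English description precedes it below -/
import Mathlib

section
/- Let d ≥ 7 be an integer and p = (d+2)/(d−2) (so 1 < 1 + 2/(d−2) < p < 2). There exists a constant C > 0 such that for all x, y ∈ ℝ one has | |1+x+y|^{p−1} − 1 − (p−1)(x+y) | ≤ C(|x|^{1+2/(d−2)} + |y|²). -/
open Real

/-- `|u^(s-1) - 1| ≤ 2|u-1|` for `u ≥ 1/2`, `0 < s ≤ 1`. -/
lemma aux_key1 (s u : ℝ) (hs0 : 0 < s) (hs1 : s ≤ 1) (hu : (1:ℝ)/2 ≤ u) :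
    |u ^ (s - 1) - 1| ≤ 2 * |u - 1| := by
  have hu0 : 0 < u := by linarith
  have hrw : u ^ (s - 1) = u ^ s / u := by
    rw [Real.rpow_sub hu0, Real.rpow_one]
  rcases le_or_gt 1 u with h1 | h1
  · have h2 : 1 ≤ u ^ s := Real.one_le_rpow h1 hs0.le
    have h3 : u ^ s ≤ u := by
      have := Real.rpow_le_rpow_of_exponent_le h1 hs1
      rwa [Real.rpow_one] at this
    have h4 : u ^ (s - 1) ≤ 1 := by
      rw [hrw, div_le_one hu0]; exact h3
    have h5 : 1 / u ≤ u ^ (s - 1) := by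
      rw [hrw, div_le_div_iff₀ hu0 hu0]; nlinarith
    have h6 : |u ^ (s - 1) - 1| = 1 - u ^ (s - 1) := by
      rw [abs_of_nonpos (by linarith)]; ring
    have h7 : |u - 1| = u - 1 := abs_of_nonneg (by linarith)
    rw [h6, h7]
    have key : 1 - 1/u ≤ u - 1 := by
      have h9 : (u - 1) - (1 - 1/u) = (u-1)^2/u := by field_simp
      have h10 : (0:ℝ) ≤ (u-1)^2/u := div_nonneg (sq_nonneg _) hu0.le
      linarith
    linarith
  · have h2 : u ^ s ≤ 1 := Real.rpow_le_one hu0.le h1.le hs0.le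
    have h3 : u ≤ u ^ s := by
      have := Real.rpow_le_rpow_of_exponent_ge hu0 h1.le hs1
      rwa [Real.rpow_one] at this
    have h4 : 1 ≤ u ^ (s - 1) := by
      rw [hrw, le_div_iff₀ hu0]; linarith
    have h5 : u ^ (s - 1) ≤ 1 / u := by
      rw [hrw, div_le_div_iff₀ hu0 hu0]; nlinarith
    have h6 : |u ^ (s - 1) - 1| = u ^ (s - 1) - 1 := abs_of_nonneg (by linarith)
    have h7 : |u - 1| = 1 - u := by rw [abs_of_nonpos (by linarith : u - 1 ≤ 0)]; ring
    rw [h6, h7]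
    have : 1 / u - 1 ≤ 2 * (1 - u) := by
      rw [div_sub' hu0.ne', div_le_iff₀ hu0]; nlinarith
    linarith

/-- Taylor-type bound for small `z`. -/
lemma aux_key2 (s z : ℝ) (hs0 : 0 < s) (hs1 : s ≤ 1) (hz : |z| ≤ 1/2) :
    |(1 + z) ^ s - 1 - s * z| ≤ 2 * z ^ 2 := by
  set f : ℝ → ℝ := fun t => (1 + t) ^ s - 1 - s * t with hf
  set f' : ℝ → ℝ := fun t => s * (1 + t) ^ (s - 1) - s with hf'
  have habs : ∀ t ∈ Set.uIcc (0:ℝ) z, |t| ≤ |z| := by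
    intro t ht
    rcases Set.mem_uIcc.1 ht with ⟨h1, h2⟩ | ⟨h1, h2⟩
    · rw [abs_of_nonneg h1]; exact le_trans h2 (le_abs_self z)
    · rw [abs_of_nonpos h2]; exact le_trans (by linarith) (neg_le_abs z)
  have hderiv : ∀ t ∈ Set.uIcc (0:ℝ) z, HasDerivWithinAt f (f' t) (Set.uIcc (0:ℝ) z) t := by
    intro t ht
    have hpos : (0:ℝ) < 1 + t := by
      have := habs t ht; have := abs_le.1 (this.trans hz); linarith [this.1]
    have h1 : HasDerivAt (fun t : ℝ => (1 + t) ^ s) (1 * s * (1 + t) ^ (s - 1)) t :=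
      ((hasDerivAt_id t).const_add 1).rpow_const (Or.inl hpos.ne')
    have h2 : HasDerivAt (fun t : ℝ => s * t) (s * 1) t := (hasDerivAt_id t).const_mul s
    have h3 : HasDerivAt f (1 * s * (1 + t) ^ (s - 1) - s * 1) t := (h1.sub_const 1).sub h2
    have : (1 : ℝ) * s * (1 + t) ^ (s - 1) - s * 1 = f' t := by simp only [hf']; ring
    rw [this] at h3
    exact h3.hasDerivWithinAt
  have hbound : ∀ t ∈ Set.uIcc (0:ℝ) z, ‖f' t‖ ≤ 2 * |z| * 1 := by
    intro t ht
    have ht2 : |t| ≤ 1/2 := (habs t ht).trans hz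
    have ht3 := abs_le.1 ht2
    have hu : (1:ℝ)/2 ≤ 1 + t := by linarith [ht3.1]
    have hk := aux_key1 s (1 + t) hs0 hs1 hu
    have heq : |f' t| = s * |(1 + t) ^ (s - 1) - 1| := by
      show |s * (1 + t) ^ (s - 1) - s| = _
      rw [show s * (1 + t) ^ (s - 1) - s = s * ((1 + t) ^ (s - 1) - 1) by ring,
        abs_mul, abs_of_nonneg hs0.le]
    rw [Real.norm_eq_abs, heq]
    have h1t : |1 + t - 1| = |t| := by ring_nf
    rw [h1t] at hk
    calc s * |(1 + t) ^ (s - 1) - 1| ≤ 1 * (2 * |t|) := by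
          apply mul_le_mul hs1 hk (abs_nonneg _) (by norm_num)
      _ ≤ 2 * |z| * 1 := by
          have := habs t ht; linarith
  have hmvt := Convex.norm_image_sub_le_of_norm_hasDerivWithin_le hderiv hbound
      (convex_uIcc 0 z) Set.left_mem_uIcc Set.right_mem_uIcc
  have hf0 : f 0 = 0 := by simp [hf]
  rw [hf0, sub_zero, sub_zero, Real.norm_eq_abs, Real.norm_eq_abs] at hmvt
  calc |f z| ≤ 2 * |z| * 1 * |z| := hmvt
    _ = 2 * z ^ 2 := by rw [← sq_abs]; ring


/-- Main generic estimate. -/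
lemma aux_main (s a : ℝ) (hs0 : 0 < s) (hs1 : s ≤ 1) (ha1 : 1 ≤ a) (ha2 : a ≤ 2)
    (x y : ℝ) : |(|1 + x + y| ^ s - 1 - s * (x + y))| ≤ 200 * (|x| ^ a + y ^ 2) := by
  have hA0 : 0 ≤ |x| ^ a := Real.rpow_nonneg (abs_nonneg x) a
  have hy0 : (0:ℝ) ≤ y ^ 2 := sq_nonneg y
  have hzxy : |x + y| ≤ |x| + |y| := abs_add_le x y
  rcases le_or_gt (|x + y|) (1/2) with hsmall | hlarge
  · -- small case
    have hz1 := abs_le.1 hsmall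
    have hpos : (0:ℝ) ≤ 1 + x + y := by linarith [hz1.1]
    have habs1 : |1 + x + y| = 1 + (x + y) := by rw [abs_of_nonneg hpos]; ring
    rw [habs1]
    have hkey := aux_key2 s (x + y) hs0 hs1 hsmall
    have hzsq : (x + y) ^ 2 ≤ 2 * x ^ 2 + 2 * y ^ 2 := by nlinarith [sq_nonneg (x - y)]
    rcases le_or_gt (|x|) 1 with hx1 | hx1
    · -- x small: x² ≤ |x|^a
      have hxA : x ^ 2 ≤ |x| ^ a := by
        rcases eq_or_lt_of_le (abs_nonneg x) with h0 | h0
        · have hx0 : x = 0 := by simpa [abs_eq_zero] using h0.symm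
          rw [hx0, abs_zero, Real.zero_rpow (by positivity)]; norm_num
        · calc x ^ 2 = |x| ^ ((2:ℕ):ℝ) := by rw [Real.rpow_natCast, sq_abs]
            _ ≤ |x| ^ a := by
                apply Real.rpow_le_rpow_of_exponent_ge h0 hx1
                exact_mod_cast ha2
      calc |(1 + (x + y)) ^ s - 1 - s * (x + y)| ≤ 2 * (x + y) ^ 2 := hkey
        _ ≤ 4 * x ^ 2 + 4 * y ^ 2 := by linarith
        _ ≤ 200 * (|x| ^ a + y ^ 2) := by nlinarith
    · -- x large: |y| ≥ |x|/2
      have hxy : |x| - |x + y| ≤ |y| := by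
        have h := abs_sub (x + y) y
        have : x + y - y = x := by ring
        rw [this] at h
        linarith
      have hy2 : |x| / 2 ≤ |y| := by linarith
      have hx2y : x ^ 2 ≤ 4 * y ^ 2 := by
        nlinarith [sq_abs x, sq_abs y, abs_nonneg x, abs_nonneg y]
      calc |(1 + (x + y)) ^ s - 1 - s * (x + y)| ≤ 2 * (x + y) ^ 2 := hkey
        _ ≤ 4 * x ^ 2 + 4 * y ^ 2 := by linarith
        _ ≤ 200 * (|x| ^ a + y ^ 2) := by nlinarith
  · -- large case
    have hzn : (0:ℝ) ≤ |x + y| := abs_nonneg _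
    have hb1 : |1 + x + y| ^ s ≤ 1 + |x + y| := by
      calc |1 + x + y| ^ s ≤ (1 + |x + y|) ^ s := by
            apply Real.rpow_le_rpow (abs_nonneg _) _ hs0.le
            calc |1 + x + y| = |1 + (x + y)| := by ring_nf
              _ ≤ |(1:ℝ)| + |x + y| := abs_add_le 1 (x + y)
              _ = 1 + |x + y| := by rw [abs_one]
        _ ≤ (1 + |x + y|) ^ (1:ℝ) := Real.rpow_le_rpow_of_exponent_le (by linarith) hs1
        _ = 1 + |x + y| := Real.rpow_one _
    have hb2 : |(|1 + x + y|) ^ s - 1 - s * (x + y)| ≤ 6 * |x + y| := by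
      have hrn : (0:ℝ) ≤ |1 + x + y| ^ s := Real.rpow_nonneg (abs_nonneg _) s
      have h2 : |s * (x + y)| = s * |x + y| := by rw [abs_mul, abs_of_nonneg hs0.le]
      have h3 : s * |x + y| ≤ |x + y| := by nlinarith
      calc |(|1 + x + y|) ^ s - 1 - s * (x + y)|
          ≤ |(|1 + x + y|) ^ s - 1| + |s * (x + y)| := abs_sub _ _
        _ ≤ (|1 + x + y| ^ s + 1) + s * |x + y| := by
            rw [h2]
            have h4 : |(|1 + x + y|) ^ s - 1| ≤ |1 + x + y| ^ s + 1 := by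
              calc |(|1 + x + y|) ^ s - 1| ≤ |(|1 + x + y|) ^ s| + |(1:ℝ)| := abs_sub _ _
                _ = |1 + x + y| ^ s + 1 := by rw [abs_of_nonneg hrn, abs_one]
            linarith
        _ ≤ (1 + |x + y|) + 1 + |x + y| := by linarith
        _ ≤ 6 * |x + y| := by linarith
    have hlow : (1:ℝ) ≤ 16 * (|x| ^ a + y ^ 2) := by
      have hxy : 1/2 ≤ |x| + |y| := by linarith
      rcases le_or_gt (1/4 : ℝ) (|x|) with hx | hx
      · have h1 : ((1:ℝ)/4) ^ a ≤ |x| ^ a := Real.rpow_le_rpow (by norm_num) hx (by linarith)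
        have h2 : ((1:ℝ)/4) ^ ((2:ℕ):ℝ) ≤ ((1:ℝ)/4) ^ a := by
          apply Real.rpow_le_rpow_of_exponent_ge (by norm_num) (by norm_num)
          exact_mod_cast ha2
        rw [Real.rpow_natCast] at h2
        norm_num at h2
        linarith
      · have hy : 1/4 ≤ |y| := by linarith
        have : (1:ℝ)/16 ≤ y ^ 2 := by nlinarith [sq_abs y]
        linarith
    have hxA : |x| ≤ |x| ^ a + 1 := by
      rcases le_or_gt (|x|) 1 with h | h
      · linarith
      · have := Real.rpow_le_rpow_of_exponent_le h.le ha1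
        rw [Real.rpow_one] at this
        linarith
    have hyB : |y| ≤ y ^ 2 + 1 := by nlinarith [sq_nonneg (|y| - 1), sq_abs y]
    calc |(|1 + x + y|) ^ s - 1 - s * (x + y)| ≤ 6 * |x + y| := hb2
      _ ≤ 6 * (|x| + |y|) := by linarith
      _ ≤ 6 * (|x| ^ a + y ^ 2) + 12 := by linarith
      _ ≤ 200 * (|x| ^ a + y ^ 2) := by linarith

/-- pointwise bound
`| |1+x+y|^{p-1} - 1 - (p-1)(x+y) | ≲ |x|^{1+2/(d-2)} + |y|²`,
for `p = (d+2)/(d-2)` with `d ≥ 7`. -/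
theorem stmt_10 (d : ℕ) (hd : 7 ≤ d) (p : ℝ) (hp : p = ((d : ℝ) + 2) / ((d : ℝ) - 2)) :
    ∃ C : ℝ, 0 < C ∧ ∀ x y : ℝ,
      |(|1 + x + y| ^ (p - 1) - 1 - (p - 1) * (x + y))|
        ≤ C * (|x| ^ ((1 : ℝ) + 2 / ((d : ℝ) - 2)) + y ^ 2) := by
  have hD : (5:ℝ) ≤ (d : ℝ) - 2 := by
    have : (7:ℝ) ≤ (d : ℝ) := by exact_mod_cast hd
    linarith
  have hD0 : (0:ℝ) < (d : ℝ) - 2 := by linarith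
  have hsval : p - 1 = 4 / ((d : ℝ) - 2) := by rw [hp]; field_simp; norm_num
  have hs0 : 0 < p - 1 := by rw [hsval]; positivity
  have hs1 : p - 1 ≤ 1 := by rw [hsval, div_le_one hD0]; linarith
  have ha1 : 1 ≤ (1 : ℝ) + 2 / ((d : ℝ) - 2) := by
    have : 0 ≤ 2 / ((d : ℝ) - 2) := by positivity
    linarith
  have ha2 : (1 : ℝ) + 2 / ((d : ℝ) - 2) ≤ 2 := by
    have : 2 / ((d : ℝ) - 2) ≤ 1 := by rw [div_le_one hD0]; linarith
    linarith
  exact ⟨200, by norm_num, fun x y => aux_main (p - 1) _ hs0 hs1 ha1 ha2 x y⟩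
end

section
/- Let d ≥ 1 be an integer. There exists a constant C = C(d) > 0 such that for all 0 < t < t', one has |t'−t|^{−1/4} ∫_{ℝ^d} |∇K_t(x) − ∇K_{t'}(x)| dx ≤ C t^{−3/4}. -/
open MeasureTheory

/-- The heat kernel on `ℝ^d`. -/
noncomputable def heatK (d : ℕ) (t : ℝ) (x : EuclideanSpace ℝ (Fin d)) : ℝ :=
  (4 * Real.pi * t) ^ (-(d : ℝ) / 2) * Real.exp (-‖x‖ ^ 2 / (4 * t))

namespace Stmt15

variable {d : ℕ}

/-- Scalar coefficient of the spatial gradient of the heat kernel. -/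
noncomputable def q (d : ℕ) (t r : ℝ) : ℝ :=
  (4 * Real.pi * t) ^ (-(d : ℝ) / 2) * Real.exp (-r ^ 2 / (4 * t)) * (-(2 * t)⁻¹)

/-- Time derivative of `q`. -/
noncomputable def qt (d : ℕ) (s r : ℝ) : ℝ :=
  ((-(d : ℝ) / 2 * (4 * Real.pi * s) ^ (-(d : ℝ) / 2 - 1) * (4 * Real.pi)) *
        Real.exp (-r ^ 2 / (4 * s))
      + (4 * Real.pi * s) ^ (-(d : ℝ) / 2) *
        (Real.exp (-r ^ 2 / (4 * s)) * (r ^ 2 / (4 * s ^ 2)))) * (-(2 * s)⁻¹)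
    + (4 * Real.pi * s) ^ (-(d : ℝ) / 2) * Real.exp (-r ^ 2 / (4 * s)) * (2 * s ^ 2)⁻¹

noncomputable def c1 (d : ℕ) (t : ℝ) : ℝ :=
  (d : ℝ) / 2 * (4 * Real.pi * t) ^ (-(d : ℝ) / 2 - 1) * (4 * Real.pi) * (2 * t)⁻¹
    + (4 * Real.pi * t) ^ (-(d : ℝ) / 2) * (2 * t ^ 2)⁻¹

noncomputable def c2 (d : ℕ) (t : ℝ) : ℝ :=
  (4 * Real.pi * t) ^ (-(d : ℝ) / 2) * ((4 * t ^ 2)⁻¹ * (2 * t)⁻¹)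

/-- Gaussian moments. -/
noncomputable def Mk (d k : ℕ) : ℝ :=
  ∫ x : EuclideanSpace ℝ (Fin d), ‖x‖ ^ k * Real.exp (-‖x‖ ^ 2)

lemma hasFDerivAt_heatK {t : ℝ} (x : EuclideanSpace ℝ (Fin d)) :
    HasFDerivAt (heatK d t) (q d t ‖x‖ • innerSL ℝ x) x := by
  have h1 : HasFDerivAt (fun y : EuclideanSpace ℝ (Fin d) => ‖y‖ ^ 2) (2 • innerSL ℝ x) x :=
    (hasStrictFDerivAt_norm_sq x).hasFDerivAt
  have h2 : HasFDerivAt (fun y : EuclideanSpace ℝ (Fin d) => -‖y‖ ^ 2 / (4 * t))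
      ((-(4 * t)⁻¹) • (2 • innerSL ℝ x)) x := by
    have := h1.const_mul (-(4 * t)⁻¹)
    have he : (fun y : EuclideanSpace ℝ (Fin d) => -‖y‖ ^ 2 / (4 * t))
        = fun y => (-(4 * t)⁻¹) * ‖y‖ ^ 2 := by funext y; ring
    rw [he]
    simpa [smul_smul] using this
  have h3 := ((h2.exp).const_mul ((4 * Real.pi * t) ^ (-(d : ℝ) / 2)))
  refine h3.congr_fderiv ?_
  ext y
  simp [q, ContinuousLinearMap.smul_apply]
  ring

lemma norm_fderiv_sub {t t' : ℝ} (x : EuclideanSpace ℝ (Fin d)) :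
    ‖fderiv ℝ (heatK d t) x - fderiv ℝ (heatK d t') x‖
      = |q d t ‖x‖ - q d t' ‖x‖| * ‖x‖ := by
  rw [(hasFDerivAt_heatK x).fderiv, (hasFDerivAt_heatK x).fderiv, ← sub_smul,
    norm_smul, Real.norm_eq_abs, innerSL_apply_norm]

lemma hasDerivAt_q (r : ℝ) {s : ℝ} (hs : 0 < s) :
    HasDerivAt (fun u => q d u r) (qt d s r) s := by
  have h4pis : (0:ℝ) < 4 * Real.pi * s := by positivity
  have hA : HasDerivAt (fun u : ℝ => (4 * Real.pi * u) ^ (-(d : ℝ) / 2))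
      (-(d : ℝ) / 2 * (4 * Real.pi * s) ^ (-(d : ℝ) / 2 - 1) * (4 * Real.pi)) s := by
    have hin : HasDerivAt (fun u : ℝ => 4 * Real.pi * u) (4 * Real.pi) s := by
      simpa using (hasDerivAt_id s).const_mul (4 * Real.pi)
    exact (Real.hasDerivAt_rpow_const (Or.inl h4pis.ne')).comp s hin
  have hB : HasDerivAt (fun u : ℝ => Real.exp (-r ^ 2 / (4 * u)))
      (Real.exp (-r ^ 2 / (4 * s)) * (r ^ 2 / (4 * s ^ 2))) s := by
    have hin : HasDerivAt (fun u : ℝ => -r ^ 2 / (4 * u)) (r ^ 2 / (4 * s ^ 2)) s := by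
      have h0 : HasDerivAt (fun u : ℝ => u⁻¹) (-(s ^ 2)⁻¹) s := hasDerivAt_inv hs.ne'
      have h1 := h0.const_mul (-r ^ 2 / 4)
      have he : (fun u : ℝ => -r ^ 2 / (4 * u)) = fun u => -r ^ 2 / 4 * u⁻¹ := by
        funext u; ring
      rw [he]
      exact h1.congr_deriv (by ring)
    simpa [mul_comm] using hin.exp
  have hC : HasDerivAt (fun u : ℝ => -(2 * u)⁻¹) ((2 * s ^ 2)⁻¹) s := by
    have h0 : HasDerivAt (fun u : ℝ => u⁻¹) (-(s ^ 2)⁻¹) s := hasDerivAt_inv hs.ne'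
    have h1 := (h0.const_mul (2:ℝ)⁻¹).neg
    have he : (fun u : ℝ => -(2 * u)⁻¹) = fun u => -((2:ℝ)⁻¹ * u⁻¹) := by
      funext u; rw [mul_inv]
    rw [he]
    exact h1.congr_deriv (by ring)
  exact (hA.mul hB).mul hC

lemma continuousAt_qt (r : ℝ) {s : ℝ} (hs : 0 < s) :
    ContinuousAt (fun u => qt d u r) s := by
  have hne : 4 * Real.pi * s ≠ 0 := by positivity
  have hin : ContinuousAt (fun u : ℝ => 4 * Real.pi * u) s := by fun_prop
  have h1 : ContinuousAt (fun u : ℝ => (4 * Real.pi * u) ^ (-(d : ℝ) / 2 - 1)) s :=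
    (Real.continuousAt_rpow_const _ _ (Or.inl hne)).comp hin
  have h2 : ContinuousAt (fun u : ℝ => (4 * Real.pi * u) ^ (-(d : ℝ) / 2)) s :=
    (Real.continuousAt_rpow_const _ _ (Or.inl hne)).comp hin
  have h3 : ContinuousAt (fun u : ℝ => Real.exp (-r ^ 2 / (4 * u))) s := by
    apply Real.continuous_exp.continuousAt.comp
    exact continuousAt_const.div (by fun_prop) (by positivity)
  have h4 : ContinuousAt (fun u : ℝ => r ^ 2 / (4 * u ^ 2)) s :=
    continuousAt_const.div (by fun_prop) (by positivity)
  have h5 : ContinuousAt (fun u : ℝ => -(2 * u)⁻¹) s :=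
    (ContinuousAt.inv₀ (by fun_prop) (by positivity)).neg
  have h6 : ContinuousAt (fun u : ℝ => (2 * u ^ 2)⁻¹) s :=
    ContinuousAt.inv₀ (by fun_prop) (by positivity)
  exact ((((h1.const_mul (-(d:ℝ)/2 : ℝ)).mul continuousAt_const).mul h3).add
      (h2.mul (h3.mul h4))).mul h5 |>.add ((h2.mul h3).mul h6)

lemma abs_q {s r : ℝ} (hs : 0 < s) :
    |q d s r| = (4 * Real.pi * s) ^ (-(d : ℝ) / 2) * Real.exp (-r ^ 2 / (4 * s)) * (2 * s)⁻¹ := by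
  have h : q d s r
      = -((4 * Real.pi * s) ^ (-(d : ℝ) / 2) * Real.exp (-r ^ 2 / (4 * s)) * (2 * s)⁻¹) := by
    unfold q; ring
  rw [h, abs_neg, abs_of_nonneg (by positivity)]

lemma exp_mono_bound {t s r : ℝ} (ht : 0 < t) (hts : t ≤ s) (hs2 : s ≤ 2 * t) :
    Real.exp (-r ^ 2 / (4 * s)) ≤ Real.exp (-r ^ 2 / (8 * t)) := by
  have hs : 0 < s := lt_of_lt_of_le ht hts
  apply Real.exp_le_exp.2
  rw [neg_div, neg_div, neg_le_neg_iff]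
  apply div_le_div_of_nonneg_left (by positivity) (by positivity)
  linarith

lemma qt_bound {t s r : ℝ} (ht : 0 < t) (hts : t ≤ s) (hs2 : s ≤ 2 * t) (hr : 0 ≤ r) :
    |qt d s r| * r ≤
      c1 d t * (r ^ 1 * Real.exp (-r ^ 2 / (8 * t)))
        + c2 d t * (r ^ 3 * Real.exp (-r ^ 2 / (8 * t))) := by
  have hs : 0 < s := lt_of_lt_of_le ht hts
  set p : ℝ := -(d : ℝ) / 2 with hp
  have hbase : (0:ℝ) < 4 * Real.pi * t := by positivity
  have hbase' : 4 * Real.pi * t ≤ 4 * Real.pi * s := by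
    have := Real.pi_pos; nlinarith
  have hA : (4 * Real.pi * s) ^ (p - 1) ≤ (4 * Real.pi * t) ^ (p - 1) := by
    apply Real.rpow_le_rpow_of_nonpos hbase hbase'
    have : (0:ℝ) ≤ (d:ℝ) := Nat.cast_nonneg d
    rw [hp]; linarith
  have hB : (4 * Real.pi * s) ^ p ≤ (4 * Real.pi * t) ^ p := by
    apply Real.rpow_le_rpow_of_nonpos hbase hbase'
    have : (0:ℝ) ≤ (d:ℝ) := Nat.cast_nonneg d
    rw [hp]; linarith
  have hE : Real.exp (-r ^ 2 / (4 * s)) ≤ Real.exp (-r ^ 2 / (8 * t)) :=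
    exp_mono_bound ht hts hs2
  have h1 : |qt d s r| ≤
      ((d : ℝ) / 2 * (4 * Real.pi * s) ^ (p - 1) * (4 * Real.pi) *
          Real.exp (-r ^ 2 / (4 * s))
        + (4 * Real.pi * s) ^ p * (Real.exp (-r ^ 2 / (4 * s)) * (r ^ 2 / (4 * s ^ 2))))
        * (2 * s)⁻¹
      + (4 * Real.pi * s) ^ p * Real.exp (-r ^ 2 / (4 * s)) * (2 * s ^ 2)⁻¹ := by
    unfold qt
    rw [← hp]
    calc |((-(d:ℝ)/2 * (4*Real.pi*s) ^ (p-1) * (4*Real.pi)) * Real.exp (-r^2/(4*s))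
          + (4*Real.pi*s) ^ p * (Real.exp (-r^2/(4*s)) * (r^2/(4*s^2)))) * (-(2*s)⁻¹)
          + (4*Real.pi*s) ^ p * Real.exp (-r^2/(4*s)) * (2*s^2)⁻¹|
        ≤ |((-(d:ℝ)/2 * (4*Real.pi*s) ^ (p-1) * (4*Real.pi)) * Real.exp (-r^2/(4*s))
          + (4*Real.pi*s) ^ p * (Real.exp (-r^2/(4*s)) * (r^2/(4*s^2)))) * (-(2*s)⁻¹)|
          + |(4*Real.pi*s) ^ p * Real.exp (-r^2/(4*s)) * (2*s^2)⁻¹| := abs_add_le _ _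
      _ ≤ _ := by
          rw [abs_mul, abs_neg, abs_inv, abs_of_nonneg (by positivity : (0:ℝ) ≤ 2*s),
            abs_of_nonneg (by positivity :
              (0:ℝ) ≤ (4*Real.pi*s) ^ p * Real.exp (-r^2/(4*s)) * (2*s^2)⁻¹)]
          apply add_le_add_left
          apply mul_le_mul_of_nonneg_right _ (by positivity)
          calc |(-(d:ℝ)/2 * (4*Real.pi*s) ^ (p-1) * (4*Real.pi)) * Real.exp (-r^2/(4*s))
              + (4*Real.pi*s) ^ p * (Real.exp (-r^2/(4*s)) * (r^2/(4*s^2)))|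
              ≤ |(-(d:ℝ)/2 * (4*Real.pi*s) ^ (p-1) * (4*Real.pi)) * Real.exp (-r^2/(4*s))|
                + |(4*Real.pi*s) ^ p * (Real.exp (-r^2/(4*s)) * (r^2/(4*s^2)))| := abs_add_le _ _
            _ = (d:ℝ)/2 * (4*Real.pi*s) ^ (p-1) * (4*Real.pi) * Real.exp (-r^2/(4*s))
                + (4*Real.pi*s) ^ p * (Real.exp (-r^2/(4*s)) * (r^2/(4*s^2))) := by
                rw [abs_of_nonneg (by positivity :
                  (0:ℝ) ≤ (4*Real.pi*s) ^ p * (Real.exp (-r^2/(4*s)) * (r^2/(4*s^2))))]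
                congr 1
                have : (-(d:ℝ)/2 * (4*Real.pi*s) ^ (p-1) * (4*Real.pi)) * Real.exp (-r^2/(4*s))
                    = -((d:ℝ)/2 * (4*Real.pi*s) ^ (p-1) * (4*Real.pi)
                        * Real.exp (-r^2/(4*s))) := by ring
                rw [this, abs_neg, abs_of_nonneg (by positivity)]
  have h2 : |qt d s r| * r ≤
      (((d : ℝ) / 2 * (4 * Real.pi * t) ^ (p - 1) * (4 * Real.pi) *
          Real.exp (-r ^ 2 / (8 * t))
        + (4 * Real.pi * t) ^ p * (Real.exp (-r ^ 2 / (8 * t)) * (r ^ 2 / (4 * t ^ 2))))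
        * (2 * t)⁻¹
      + (4 * Real.pi * t) ^ p * Real.exp (-r ^ 2 / (8 * t)) * (2 * t ^ 2)⁻¹) * r := by
    apply mul_le_mul_of_nonneg_right (le_trans h1 _) hr
    gcongr
  refine h2.trans (le_of_eq ?_)
  unfold c1 c2
  rw [← hp]
  ring

lemma integrable_exp_gauss {b : ℝ} (hb : 0 < b) :
    Integrable (fun x : EuclideanSpace ℝ (Fin d) => Real.exp (-(b * ‖x‖ ^ 2))) := by
  have h := (GaussianFourier.integrable_cexp_neg_mul_sq_norm_add
    (b := (b : ℂ)) (by simpa using hb) 0 (0 : EuclideanSpace ℝ (Fin d))).norm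
  convert h using 2 with x
  rw [Complex.norm_exp]
  congr 1
  simp [Complex.add_re, Complex.mul_re, Complex.ofReal_re, Complex.ofReal_im, pow_two]

lemma pow_mul_exp_le {c : ℝ} (hc : 0 < c) {k : ℕ} (hk : k ≤ 4) {r : ℝ} (hr : 0 ≤ r) :
    r ^ k * Real.exp (-(c * r ^ 2)) ≤ max 1 (4 / c ^ 2) := by
  have hexp : Real.exp (-(c * r ^ 2)) ≤ 1 := by
    rw [Real.exp_le_one_iff]
    simp only [neg_nonpos]
    positivity
  rcases le_total r 1 with h1 | h1
  · refine le_max_of_le_left ?_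
    calc r ^ k * Real.exp (-(c * r ^ 2)) ≤ 1 * 1 :=
          mul_le_mul (pow_le_one₀ hr h1) hexp (by positivity) one_pos.le
      _ = 1 := by ring
  · refine le_max_of_le_right ?_
    have hcr : 0 ≤ c * r ^ 2 := by positivity
    have he4 : c ^ 2 * r ^ 4 / 4 ≤ Real.exp (c * r ^ 2) := by
      have := Real.add_one_le_exp (c * r ^ 2 / 2)
      have h2 : (c * r ^ 2 / 2 + 1) ^ 2 ≤ Real.exp (c * r ^ 2 / 2) ^ 2 := by
        apply sq_le_sq' _ this
        nlinarith
      calc c ^ 2 * r ^ 4 / 4 ≤ (c * r ^ 2 / 2 + 1) ^ 2 := by nlinarith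
        _ ≤ Real.exp (c * r ^ 2 / 2) ^ 2 := h2
        _ = Real.exp (c * r ^ 2) := by rw [← Real.exp_nat_mul]; ring_nf
    have hr0 : (0:ℝ) < r := lt_of_lt_of_le one_pos h1
    have hepos : (0:ℝ) < c ^ 2 * r ^ 4 / 4 := by positivity
    have hle : Real.exp (-(c * r ^ 2)) ≤ (c ^ 2 * r ^ 4 / 4)⁻¹ := by
      rw [Real.exp_neg]
      exact inv_anti₀ hepos he4
    calc r ^ k * Real.exp (-(c * r ^ 2)) ≤ r ^ 4 * (c ^ 2 * r ^ 4 / 4)⁻¹ := by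
          apply mul_le_mul _ hle (Real.exp_nonneg _) (by positivity)
          exact pow_le_pow_right₀ h1 hk
      _ = 4 / c ^ 2 := by field_simp

lemma integrable_pow_gauss {b : ℝ} (hb : 0 < b) {k : ℕ} (hk : k ≤ 4) :
    Integrable (fun x : EuclideanSpace ℝ (Fin d) => ‖x‖ ^ k * Real.exp (-(b * ‖x‖ ^ 2))) := by
  have hb2 : (0:ℝ) < b / 2 := by positivity
  apply Integrable.mono' ((integrable_exp_gauss hb2).const_mul (max 1 (4 / (b/2) ^ 2)))
  · apply Continuous.aestronglyMeasurable; fun_prop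
  · filter_upwards with x
    rw [Real.norm_eq_abs, abs_of_nonneg (by positivity)]
    have : Real.exp (-(b * ‖x‖ ^ 2))
        = Real.exp (-(b/2 * ‖x‖ ^ 2)) * Real.exp (-(b/2 * ‖x‖ ^ 2)) := by
      rw [← Real.exp_add]; ring_nf
    rw [this, ← mul_assoc]
    apply mul_le_mul _ le_rfl (Real.exp_nonneg _) (by positivity)
    exact pow_mul_exp_le hb2 hk (norm_nonneg x)

lemma gauss_scaling (k : ℕ) {b : ℝ} (hb : 0 < b) :
    ∫ x : EuclideanSpace ℝ (Fin d), ‖x‖ ^ k * Real.exp (-(b * ‖x‖ ^ 2))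
      = (Real.sqrt b)⁻¹ ^ (d + k) *
        ∫ x : EuclideanSpace ℝ (Fin d), ‖x‖ ^ k * Real.exp (-‖x‖ ^ 2) := by
  have hR : (0:ℝ) < (Real.sqrt b)⁻¹ := by positivity
  have key := MeasureTheory.Measure.integral_comp_smul_of_nonneg
    (μ := (volume : Measure (EuclideanSpace ℝ (Fin d))))
    (fun x : EuclideanSpace ℝ (Fin d) => ‖x‖ ^ k * Real.exp (-(b * ‖x‖ ^ 2)))
    (Real.sqrt b)⁻¹ (hR := hR.le)
  have hfr : ∀ x : EuclideanSpace ℝ (Fin d),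
      ‖(Real.sqrt b)⁻¹ • x‖ ^ k * Real.exp (-(b * ‖(Real.sqrt b)⁻¹ • x‖ ^ 2))
        = (Real.sqrt b)⁻¹ ^ k * (‖x‖ ^ k * Real.exp (-‖x‖ ^ 2)) := by
    intro x
    rw [norm_smul, Real.norm_eq_abs, abs_of_nonneg hR.le]
    have : b * ((Real.sqrt b)⁻¹ * ‖x‖) ^ 2 = ‖x‖ ^ 2 := by
      rw [mul_pow, inv_pow, Real.sq_sqrt hb.le]
      field_simp
    rw [mul_pow, this]
    ring
  simp only [hfr] at key
  rw [integral_const_mul] at key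
  rw [finrank_euclideanSpace_fin, smul_eq_mul] at key
  have hpow : (0:ℝ) < (Real.sqrt b)⁻¹ ^ d := by positivity
  rw [pow_add]
  field_simp at key ⊢
  linarith [key]

lemma integral_pow_gauss_div {k : ℕ} {c : ℝ} (hc : 0 < c) :
    (∫ x : EuclideanSpace ℝ (Fin d), ‖x‖ ^ k * Real.exp (-‖x‖ ^ 2 / c))
      = Real.sqrt c ^ (d + k) * Mk d k := by
  have hb : (0:ℝ) < c⁻¹ := by positivity
  have he : (fun x : EuclideanSpace ℝ (Fin d) => ‖x‖ ^ k * Real.exp (-‖x‖ ^ 2 / c))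
      = fun x => ‖x‖ ^ k * Real.exp (-(c⁻¹ * ‖x‖ ^ 2)) := by
    funext x
    rw [neg_div, div_eq_inv_mul]
  rw [he, gauss_scaling k hb, Real.sqrt_inv, inv_inv, Mk]

lemma integrable_pow_gauss_div {k : ℕ} (hk : k ≤ 4) {c : ℝ} (hc : 0 < c) :
    Integrable (fun x : EuclideanSpace ℝ (Fin d) => ‖x‖ ^ k * Real.exp (-‖x‖ ^ 2 / c)) := by
  have hb : (0:ℝ) < c⁻¹ := by positivity
  have he : (fun x : EuclideanSpace ℝ (Fin d) => ‖x‖ ^ k * Real.exp (-‖x‖ ^ 2 / c))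
      = fun x => ‖x‖ ^ k * Real.exp (-(c⁻¹ * ‖x‖ ^ 2)) := by
    funext x
    rw [neg_div, div_eq_inv_mul]
  rw [he]
  exact integrable_pow_gauss hb hk

lemma Mk_nonneg (d k : ℕ) : 0 ≤ Mk d k :=
  integral_nonneg fun x => by positivity

/-- Helper : `(u^2) ^ (-(n:ℝ)/2) = (u^n)⁻¹`. -/
lemma sq_rpow_eq {u : ℝ} (hu : 0 < u) (n : ℕ) {a : ℝ} (ha : a = -(n:ℝ)/2) :
    ((u ^ 2 : ℝ)) ^ a = (u ^ n)⁻¹ := by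
  subst ha
  rw [← Real.rpow_natCast u 2, ← Real.rpow_mul hu.le,
    show ((2:ℕ):ℝ) * (-(n:ℝ)/2) = -(n:ℝ) by push_cast; ring,
    Real.rpow_neg hu.le, Real.rpow_natCast]

lemma diff_q_bound {t t' r : ℝ} (ht : 0 < t) (h1 : t < t') (h2 : t' ≤ 2*t) (hr : 0 ≤ r) :
    |q d t r - q d t' r| * r ≤ (t' - t) *
      (c1 d t * (r ^ 1 * Real.exp (-r ^ 2 / (8*t)))
        + c2 d t * (r ^ 3 * Real.exp (-r ^ 2 / (8*t)))) := by
  have hInt : IntervalIntegrable (fun s => qt d s r) volume t t' := by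
    apply ContinuousOn.intervalIntegrable
    intro s hsm
    have hs : 0 < s := by
      rw [Set.uIcc_of_le h1.le] at hsm; exact lt_of_lt_of_le ht hsm.1
    exact (continuousAt_qt r hs).continuousWithinAt
  have hftc : ∫ s in t..t', qt d s r = q d t' r - q d t r := by
    apply intervalIntegral.integral_eq_sub_of_hasDerivAt _ hInt
    intro s hsm
    have hs : 0 < s := by
      rw [Set.uIcc_of_le h1.le] at hsm; exact lt_of_lt_of_le ht hsm.1
    exact hasDerivAt_q r hs
  have habs : |q d t r - q d t' r| ≤ ∫ s in t..t', |qt d s r| := by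
    rw [abs_sub_comm, ← hftc]
    exact intervalIntegral.abs_integral_le_integral_abs h1.le
  calc |q d t r - q d t' r| * r
      ≤ (∫ s in t..t', |qt d s r|) * r := mul_le_mul_of_nonneg_right habs hr
    _ = ∫ s in t..t', |qt d s r| * r := (intervalIntegral.integral_mul_const r _).symm
    _ ≤ ∫ _s in t..t', (c1 d t * (r ^ 1 * Real.exp (-r ^ 2 / (8*t)))
          + c2 d t * (r ^ 3 * Real.exp (-r ^ 2 / (8*t)))) := by
        apply intervalIntegral.integral_mono_on h1.le (hInt.abs.mul_const r)
          intervalIntegrable_const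
        intro s hsm
        exact qt_bound ht hsm.1 (le_trans hsm.2 h2) hr
    _ = (t' - t) * _ := by rw [intervalIntegral.integral_const, smul_eq_mul]

noncomputable def A1c (d : ℕ) : ℝ :=
  ((d:ℝ)/2 * (4*Real.pi)^(-(d:ℝ)/2-1) * (4*Real.pi) * 2⁻¹ + (4*Real.pi)^(-(d:ℝ)/2) * 2⁻¹)
      * (Real.sqrt 8 ^ (d+1) * Mk d 1)
    + (4*Real.pi)^(-(d:ℝ)/2) * 8⁻¹ * (Real.sqrt 8 ^ (d+3) * Mk d 3)

noncomputable def Bc (d : ℕ) : ℝ :=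
  (4*Real.pi)^(-(d:ℝ)/2) * 2⁻¹ * (Real.sqrt 4 ^ (d+1) * Mk d 1)

lemma A1c_nonneg : 0 ≤ A1c d :=
  add_nonneg
    (mul_nonneg (by positivity) (mul_nonneg (by positivity) (Mk_nonneg d 1)))
    (mul_nonneg (by positivity) (mul_nonneg (by positivity) (Mk_nonneg d 3)))

lemma Bc_nonneg : 0 ≤ Bc d :=
  mul_nonneg (by positivity) (mul_nonneg (by positivity) (Mk_nonneg d 1))

lemma integral_maj1 {t : ℝ} (ht : 0 < t) :
    (∫ x : EuclideanSpace ℝ (Fin d),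
        (c1 d t * (‖x‖ ^ 1 * Real.exp (-‖x‖ ^ 2 / (8*t)))
          + c2 d t * (‖x‖ ^ 3 * Real.exp (-‖x‖ ^ 2 / (8*t)))))
      = A1c d * t ^ (-(3:ℝ)/2) := by
  have h8t : (0:ℝ) < 8 * t := by positivity
  rw [integral_add ((integrable_pow_gauss_div (by norm_num) h8t).const_mul _)
    ((integrable_pow_gauss_div (by norm_num) h8t).const_mul _),
    integral_const_mul, integral_const_mul, integral_pow_gauss_div h8t,
    integral_pow_gauss_div h8t]
  obtain ⟨u, hu, rfl⟩ : ∃ u : ℝ, 0 < u ∧ t = u ^ 2 :=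
    ⟨Real.sqrt t, by positivity, (Real.sq_sqrt ht.le).symm⟩
  unfold c1 c2 A1c
  have hs8 : Real.sqrt (8 * u ^ 2) = Real.sqrt 8 * u := by
    rw [Real.sqrt_mul (by norm_num), Real.sqrt_sq hu.le]
  have hm : ∀ a : ℝ, (4 * Real.pi * u ^ 2 : ℝ) ^ a = (4*Real.pi) ^ a * ((u^2:ℝ)) ^ a :=
    fun a => Real.mul_rpow (by positivity) (by positivity)
  rw [hs8, hm, hm, sq_rpow_eq hu d rfl,
    sq_rpow_eq hu (d+2) (by push_cast; ring),
    sq_rpow_eq hu 3 (by norm_num), mul_pow, mul_pow]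
  field_simp
  ring

lemma integral_maj2 {s : ℝ} (hs : 0 < s) :
    (∫ x : EuclideanSpace ℝ (Fin d),
        (4*Real.pi*s) ^ (-(d:ℝ)/2) * (2*s)⁻¹ * (‖x‖ ^ 1 * Real.exp (-‖x‖ ^ 2 / (4*s))))
      = Bc d * s ^ (-(1:ℝ)/2) := by
  have h4s : (0:ℝ) < 4 * s := by positivity
  rw [integral_const_mul, integral_pow_gauss_div h4s]
  obtain ⟨u, hu, rfl⟩ : ∃ u : ℝ, 0 < u ∧ s = u ^ 2 :=
    ⟨Real.sqrt s, by positivity, (Real.sq_sqrt hs.le).symm⟩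
  unfold Bc
  have hs4 : Real.sqrt (4 * u ^ 2) = Real.sqrt 4 * u := by
    rw [Real.sqrt_mul (by norm_num), Real.sqrt_sq hu.le]
  have hm : (4 * Real.pi * u ^ 2 : ℝ) ^ (-(d:ℝ)/2)
      = (4*Real.pi) ^ (-(d:ℝ)/2) * ((u^2:ℝ)) ^ (-(d:ℝ)/2) :=
    Real.mul_rpow (by positivity) (by positivity)
  rw [hs4, hm, sq_rpow_eq hu d rfl, sq_rpow_eq hu 1 (by norm_num), mul_pow]
  field_simp
  ring

end Stmt15

open Stmt15 in
/-- Hölder-type time regularity of the heat kernel gradient: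
`|t'-t|^{-1/4} ∫ |∇K_t(x) - ∇K_{t'}(x)| dx ≤ C t^{-3/4}` for `0 < t < t'`. -/
theorem stmt_15 (d : ℕ) (hd : 1 ≤ d) :
    ∃ C : ℝ, 0 < C ∧ ∀ t t' : ℝ, 0 < t → t < t' →
      |t' - t| ^ (-(1 / 4 : ℝ))
          * (∫ x, ‖fderiv ℝ (heatK d t) x - fderiv ℝ (heatK d t') x‖)
        ≤ C * t ^ (-(3 / 4 : ℝ)) := by
  classical
  refine ⟨A1c d + 2 * Bc d + 1, ?_, fun t t' ht htt' => ?_⟩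
  · have h1 := A1c_nonneg (d := d)
    have h2 := Bc_nonneg (d := d)
    linarith
  have hI_nonneg : 0 ≤ ∫ x, ‖fderiv ℝ (heatK d t) x - fderiv ℝ (heatK d t') x‖ :=
    integral_nonneg fun x => norm_nonneg _
  have hd0 : 0 < t' - t := sub_pos.2 htt'
  have ht' : 0 < t' := lt_trans ht htt'
  rw [abs_of_pos hd0]
  have hA1 := A1c_nonneg (d := d)
  have hB1 := Bc_nonneg (d := d)
  rcases le_or_gt t' (2*t) with hcase | hcase
  · -- case t' ≤ 2t : use the time derivative bound
    have hint1 : Integrable (fun x : EuclideanSpace ℝ (Fin d) =>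
        c1 d t * (‖x‖ ^ 1 * Real.exp (-‖x‖ ^ 2 / (8*t)))
          + c2 d t * (‖x‖ ^ 3 * Real.exp (-‖x‖ ^ 2 / (8*t)))) :=
      ((integrable_pow_gauss_div (by norm_num) (by positivity)).const_mul _).add
        ((integrable_pow_gauss_div (by norm_num) (by positivity)).const_mul _)
    have hmono : (∫ x, ‖fderiv ℝ (heatK d t) x - fderiv ℝ (heatK d t') x‖)
        ≤ (t'-t) * (A1c d * t ^ (-(3:ℝ)/2)) := by
      have step1 : (∫ x, ‖fderiv ℝ (heatK d t) x - fderiv ℝ (heatK d t') x‖)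
          ≤ ∫ x : EuclideanSpace ℝ (Fin d), (t'-t) *
            (c1 d t * (‖x‖ ^ 1 * Real.exp (-‖x‖ ^ 2 / (8*t)))
              + c2 d t * (‖x‖ ^ 3 * Real.exp (-‖x‖ ^ 2 / (8*t)))) := by
        apply integral_mono_of_nonneg (ae_of_all _ fun x => norm_nonneg _)
          (hint1.const_mul _)
        filter_upwards with x
        rw [norm_fderiv_sub]
        exact diff_q_bound ht htt' hcase (norm_nonneg x)
      rwa [integral_const_mul, integral_maj1 ht] at step1
    calc (t' - t) ^ (-(1 / 4 : ℝ))
          * (∫ x, ‖fderiv ℝ (heatK d t) x - fderiv ℝ (heatK d t') x‖)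
        ≤ (t' - t) ^ (-(1 / 4 : ℝ)) * ((t'-t) * (A1c d * t ^ (-(3:ℝ)/2))) :=
          mul_le_mul_of_nonneg_left hmono (Real.rpow_nonneg hd0.le _)
      _ = (t' - t) ^ ((3/4 : ℝ)) * (A1c d * t ^ (-(3:ℝ)/2)) := by
          rw [← mul_assoc]
          congr 1
          have h := Real.rpow_add hd0 (-(1/4 : ℝ)) 1
          rw [Real.rpow_one] at h
          rw [← h]
          norm_num
      _ ≤ t ^ ((3/4 : ℝ)) * (A1c d * t ^ (-(3:ℝ)/2)) := by
          apply mul_le_mul_of_nonneg_right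
            (Real.rpow_le_rpow hd0.le (by linarith) (by norm_num))
            (mul_nonneg hA1 (Real.rpow_nonneg ht.le _))
      _ = A1c d * (t ^ ((3/4 : ℝ)) * t ^ (-(3:ℝ)/2)) := by ring
      _ = A1c d * t ^ (-(3 / 4 : ℝ)) := by rw [← Real.rpow_add ht]; norm_num
      _ ≤ (A1c d + 2 * Bc d + 1) * t ^ (-(3 / 4 : ℝ)) := by
          apply mul_le_mul_of_nonneg_right _ (Real.rpow_nonneg ht.le _)
          linarith
  · -- case 2t < t' : crude bound by the two separate integrals
    have hg1 : Integrable (fun x : EuclideanSpace ℝ (Fin d) =>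
        (4*Real.pi*t) ^ (-(d:ℝ)/2) * (2*t)⁻¹ * (‖x‖ ^ 1 * Real.exp (-‖x‖ ^ 2 / (4*t)))) :=
      (integrable_pow_gauss_div (by norm_num) (by positivity)).const_mul _
    have hg2 : Integrable (fun x : EuclideanSpace ℝ (Fin d) =>
        (4*Real.pi*t') ^ (-(d:ℝ)/2) * (2*t')⁻¹ * (‖x‖ ^ 1 * Real.exp (-‖x‖ ^ 2 / (4*t')))) :=
      (integrable_pow_gauss_div (by norm_num) (by positivity)).const_mul _
    have hmono : (∫ x, ‖fderiv ℝ (heatK d t) x - fderiv ℝ (heatK d t') x‖)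
        ≤ 2 * Bc d * t ^ (-(1:ℝ)/2) := by
      have step1 : (∫ x, ‖fderiv ℝ (heatK d t) x - fderiv ℝ (heatK d t') x‖)
          ≤ ∫ x : EuclideanSpace ℝ (Fin d),
            ((4*Real.pi*t) ^ (-(d:ℝ)/2) * (2*t)⁻¹ * (‖x‖ ^ 1 * Real.exp (-‖x‖ ^ 2 / (4*t)))
              + (4*Real.pi*t') ^ (-(d:ℝ)/2) * (2*t')⁻¹
                * (‖x‖ ^ 1 * Real.exp (-‖x‖ ^ 2 / (4*t')))) := by
        apply integral_mono_of_nonneg (ae_of_all _ fun x => norm_nonneg _) (hg1.add hg2)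
        filter_upwards with x
        simp only [Pi.add_apply]
        rw [norm_fderiv_sub]
        calc |q d t ‖x‖ - q d t' ‖x‖| * ‖x‖
            ≤ (|q d t ‖x‖| + |q d t' ‖x‖|) * ‖x‖ :=
              mul_le_mul_of_nonneg_right (abs_sub _ _) (norm_nonneg x)
          _ = _ := by rw [abs_q ht, abs_q ht']; ring
      rw [integral_add hg1 hg2, integral_maj2 ht, integral_maj2 ht'] at step1
      have hle : Bc d * t' ^ (-(1:ℝ)/2) ≤ Bc d * t ^ (-(1:ℝ)/2) :=
        mul_le_mul_of_nonneg_left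
          (Real.rpow_le_rpow_of_nonpos ht htt'.le (by norm_num)) hB1
      calc (∫ x, ‖fderiv ℝ (heatK d t) x - fderiv ℝ (heatK d t') x‖)
          ≤ Bc d * t ^ (-(1:ℝ)/2) + Bc d * t' ^ (-(1:ℝ)/2) := step1
        _ ≤ Bc d * t ^ (-(1:ℝ)/2) + Bc d * t ^ (-(1:ℝ)/2) := by linarith
        _ = 2 * Bc d * t ^ (-(1:ℝ)/2) := by ring
    have hbase : (t' - t) ^ (-(1 / 4 : ℝ)) ≤ t ^ (-(1/4 : ℝ)) :=
      Real.rpow_le_rpow_of_nonpos ht (by linarith) (by norm_num)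
    calc (t' - t) ^ (-(1 / 4 : ℝ))
          * (∫ x, ‖fderiv ℝ (heatK d t) x - fderiv ℝ (heatK d t') x‖)
        ≤ t ^ (-(1/4 : ℝ)) * (2 * Bc d * t ^ (-(1:ℝ)/2)) :=
          mul_le_mul hbase hmono hI_nonneg (Real.rpow_nonneg ht.le _)
      _ = 2 * Bc d * (t ^ (-(1/4 : ℝ)) * t ^ (-(1:ℝ)/2)) := by ring
      _ = 2 * Bc d * t ^ (-(3 / 4 : ℝ)) := by rw [← Real.rpow_add ht]; norm_num
      _ ≤ (A1c d + 2 * Bc d + 1) * t ^ (-(3 / 4 : ℝ)) := by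
          apply mul_le_mul_of_nonneg_right _ (Real.rpow_nonneg ht.le _)
          linarith
end
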